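/- arXiv:1711.03708 — 3 statements merged into one kernel-verified Lean document; each statement's English description precedes it below -/
import Mathlib

section
/- Let H be a Hopf algebra with δ(h) = Δ(h) − (h ⊗ 1 + 1 ⊗ h), τ the twist map, δ_cc = (1/2)(δ + τ∘δ), δ_ac = (1/2)(δ − τ∘δ). Suppose s, t ∈ H are anti-cocommutative, i.e. τ∘δ(s) = −δ(s), τ∘δ(t) = −δ(t), and δ(s), δ(t) ∈ P(H) ⊗ P(H), where P(H) is the space of primitive elements. Then δ_cc([s,t]) = [δ(s), δ(t)] in H ⊗ H. -/
open TensorProduct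

noncomputable section

variable {k H : Type*}

/-- δ(h) = Δ(h) − (h ⊗ 1 + 1 ⊗ h). -/
def delta [CommSemiring k] [Ring H] [Bialgebra k H] : H →ₗ[k] H ⊗[k] H :=
  (Coalgebra.comul (R := k) (A := H)) - ((TensorProduct.mk k H H).flip 1 + TensorProduct.mk k H H 1)

/-- the twist map τ(a ⊗ b) = b ⊗ a. -/
def tw [CommSemiring k] [AddCommMonoid H] [Module k H] : H ⊗[k] H →ₗ[k] H ⊗[k] H :=
  (TensorProduct.comm k H H).toLinearMap

/-- An element is primitive if Δ(x) = x ⊗ 1 + 1 ⊗ x. -/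
def IsPrimitive [CommSemiring k] [Semiring H] [Bialgebra k H] (x : H) : Prop :=
  Coalgebra.comul (R := k) x = x ⊗ₜ[k] 1 + 1 ⊗ₜ[k] x

/-- δ_cc = (1/2)(δ + τ∘δ). -/
def deltaCC [Field k] [Ring H] [Bialgebra k H] (h : H) : H ⊗[k] H :=
  (2 : k)⁻¹ • (delta h + tw (delta h))

/-- δ_ac = (1/2)(δ − τ∘δ). -/
def deltaAC [Field k] [Ring H] [Bialgebra k H] (h : H) : H ⊗[k] H :=
  (2 : k)⁻¹ • (delta h - tw (delta h))

/-- The submodule of primitive elements (kernel of δ). -/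
def Prim [Field k] [Ring H] [Bialgebra k H] : Submodule k H :=
  LinearMap.ker (delta (k := k) (H := H))

/-- The image of P(H) ⊗ P(H) inside H ⊗ H. -/
def PtP [Field k] [Ring H] [Bialgebra k H] : Submodule k (H ⊗[k] H) :=
  LinearMap.range (TensorProduct.map (Prim (k := k) (H := H)).subtype
    (Prim (k := k) (H := H)).subtype)


lemma tw_tmul [Field k] [Ring H] [Bialgebra k H] (a b : H) :
    tw (k := k) (a ⊗ₜ[k] b) = b ⊗ₜ[k] a := rfl

lemma tw_mul [Field k] [Ring H] [Bialgebra k H] (x y : H ⊗[k] H) :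
    tw (k := k) (x * y) = tw x * tw y := by
  have h : tw (k := k) (H := H) = (Algebra.TensorProduct.comm k H H).toLinearMap := by
    ext a b; rfl
  simp [h, _root_.map_mul]

lemma delta_mul [Field k] [Ring H] [Bialgebra k H] (x y : H) :
    delta (k := k) (x * y) = delta x * delta y + delta x * (y ⊗ₜ[k] 1 + 1 ⊗ₜ[k] y)
      + (x ⊗ₜ[k] 1 + 1 ⊗ₜ[k] x) * delta y + x ⊗ₜ[k] y + y ⊗ₜ[k] x := by
  have hc : Coalgebra.comul (R := k) (x * y)
      = Coalgebra.comul (R := k) x * Coalgebra.comul (R := k) y := by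
    simpa using map_mul (Bialgebra.comulAlgHom k H) x y
  simp only [delta, LinearMap.sub_apply, LinearMap.add_apply, TensorProduct.mk_apply,
    LinearMap.flip_apply, hc]
  simp only [mul_sub, sub_mul, mul_add, add_mul, Algebra.TensorProduct.tmul_mul_tmul,
    mul_one, one_mul]
  abel

theorem stmt3 [Field k] [CharZero k] [Ring H] [HopfAlgebra k H] (s t : H)
    (hs1 : tw (delta (k := k) s) = - delta s) (hs2 : delta (k := k) s ∈ PtP (k := k) (H := H))
    (ht1 : tw (delta (k := k) t) = - delta t) (ht2 : delta (k := k) t ∈ PtP (k := k) (H := H)) :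
    deltaCC (k := k) (s * t - t * s) = delta s * delta t - delta t * delta s := by
  set a := delta (k := k) s with ha
  set b := delta (k := k) t with hb
  set X : H ⊗[k] H := s ⊗ₜ[k] 1 + 1 ⊗ₜ[k] s with hX
  set Y : H ⊗[k] H := t ⊗ₜ[k] 1 + 1 ⊗ₜ[k] t with hY
  have hd : delta (k := k) (s * t - t * s)
      = (a * b - b * a) + (a * Y - Y * a) + (X * b - b * X) := by
    rw [map_sub, delta_mul, delta_mul, ← ha, ← hb, ← hX, ← hY]
    abel
  have htwX : tw (k := k) X = X := by simp [hX, tw_tmul]; abel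
  have htwY : tw (k := k) Y = Y := by simp [hY, tw_tmul]; abel
  have htw : tw (k := k) (delta (k := k) (s * t - t * s))
      = (a * b - b * a) - (a * Y - Y * a) - (X * b - b * X) := by
    rw [hd]
    simp only [map_add, map_sub, tw_mul, hs1, ht1, htwX, htwY, ← ha, ← hb]
    simp only [neg_mul, mul_neg]
    abel
  have hsum : delta (k := k) (s * t - t * s) + tw (k := k) (delta (k := k) (s * t - t * s))
      = (2 : k) • (a * b - b * a) := by
    rw [htw, hd, two_smul]; abel
  rw [deltaCC, hsum, smul_smul, inv_mul_cancel₀ (two_ne_zero), one_smul]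
end
end

section
/- Let H be a Hopf algebra and t ∈ H with Δ(t) = t ⊗ 1 + 1 ⊗ t + x ⊗ y − y ⊗ x for primitive elements x, y. Then for any primitive element g ∈ H, the right adjoint action satisfies ad_r[t](g) := Σ S(t₁) g t₂ = −[t, g] + y[g, x] + x[y, g], and the left adjoint action satisfies ad_l[t](g) := Σ t₁ g S(t₂) = [t, g] + [g, x]y + [y, g]x. -/
open TensorProduct

noncomputable section

variable {k H : Type*}

/-- The antipode as a linear map. -/
def Sa [CommSemiring k] [Semiring H] [HopfAlgebra k H] : H →ₗ[k] H :=
  HopfAlgebra.antipode (R := k)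

/-- a ⊗ b ↦ a * c * b. -/
def sandwich [CommSemiring k] [Semiring H] [Algebra k H] (c : H) : H ⊗[k] H →ₗ[k] H :=
  (LinearMap.mul' k H).comp (TensorProduct.map (LinearMap.mulRight k c) LinearMap.id)

/-- left adjoint action ad_l[h](c) = Σ h₁ c S(h₂). -/
def adl [CommSemiring k] [Semiring H] [HopfAlgebra k H] (h c : H) : H :=
  sandwich (k := k) c
    ((TensorProduct.map LinearMap.id (Sa (k := k))) (Coalgebra.comul h))

/-- right adjoint action ad_r[h](c) = Σ S(h₁) c h₂. -/
def adr [CommSemiring k] [Semiring H] [HopfAlgebra k H] (h c : H) : H :=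
  sandwich (k := k) c
    ((TensorProduct.map (Sa (k := k)) LinearMap.id) (Coalgebra.comul h))

theorem stmt6 [Field k] [Ring H] [HopfAlgebra k H] (t x y g : H)
    (hx : IsPrimitive (k := k) x) (hy : IsPrimitive (k := k) y)
    (hg : IsPrimitive (k := k) g)
    (ht : Coalgebra.comul (R := k) t = t ⊗ₜ[k] 1 + 1 ⊗ₜ[k] t + x ⊗ₜ[k] y - y ⊗ₜ[k] x) :
    adr (k := k) t g = -(t * g - g * t) + y * (g * x - x * g) + x * (y * g - g * y) ∧
    adl (k := k) t g = (t * g - g * t) + (g * x - x * g) * y + (y * g - g * y) * x := by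
  classical
  have hS1 : (Sa (k := k) (1 : H)) = 1 := by
    have := HopfAlgebra.mul_antipode_rTensor_comul_apply (R := k) (A := H) (1 : H)
    simpa [Sa, Bialgebra.comul_one, Algebra.TensorProduct.one_def, LinearMap.rTensor_tmul, LinearMap.mul'_apply] using this
  -- counit of a primitive element kills everything after scaling
  have key : ∀ z : H, IsPrimitive (k := k) z →
      algebraMap k H (Coalgebra.counit (R := k) z) = 0 := by
    intro z hz
    have h1 := Coalgebra.rTensor_counit_comul (R := k) z
    rw [hz] at h1
    simp only [map_add, LinearMap.rTensor_tmul, Bialgebra.counit_one] at h1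
    have h2 : (Coalgebra.counit (R := k) z) ⊗ₜ[k] (1 : H) = 0 := by
      have := sub_eq_zero.mpr h1
      simpa [add_sub_cancel_right] using this
    have := congrArg (TensorProduct.lid k H) h2
    simpa [Algebra.algebraMap_eq_smul_one] using this
  have hsmul : ∀ z : H, IsPrimitive (k := k) z → ∀ h : H,
      (Coalgebra.counit (R := k) z) • h = 0 := by
    intro z hz h
    have : (Coalgebra.counit (R := k) z) • h
        = algebraMap k H (Coalgebra.counit (R := k) z) * h := by
      rw [Algebra.smul_def]
    rw [this, key z hz, zero_mul]
  -- antipode of a primitive element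
  have hSprim : ∀ z : H, IsPrimitive (k := k) z → Sa (k := k) z = -z := by
    intro z hz
    have := HopfAlgebra.mul_antipode_rTensor_comul_apply (R := k) (A := H) z
    rw [hz] at this
    simp only [map_add, LinearMap.rTensor_tmul, LinearMap.mul'_apply, mul_one, one_mul,
      key z hz] at this
    have hS1' : HopfAlgebra.antipode (R := k) (1 : H) = 1 := hS1
    rw [hS1'] at this
    have : HopfAlgebra.antipode (R := k) z + z = 0 := by simpa using this
    show HopfAlgebra.antipode (R := k) z = -z
    exact eq_neg_of_add_eq_zero_left this
  -- counit of t scaled is zero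
  have hεt : algebraMap k H (Coalgebra.counit (R := k) t) = 0 := by
    have h1 := Coalgebra.rTensor_counit_comul (R := k) t
    rw [ht] at h1
    simp only [map_add, map_sub, LinearMap.rTensor_tmul, Bialgebra.counit_one] at h1
    have := congrArg (TensorProduct.lid k H) h1
    simp only [map_add, map_sub, TensorProduct.lid_tmul, one_smul] at this
    have h2 : (Coalgebra.counit (R := k) t) • (1 : H)
        + (Coalgebra.counit (R := k) x) • y - (Coalgebra.counit (R := k) y) • x = 0 := by
      have h3 := this
      abel_nf at h3 ⊢
      linear_combination (norm := abel_nf) h3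
    rw [hsmul x hx y, hsmul y hy x] at h2
    simp only [add_zero, sub_zero] at h2
    rw [Algebra.algebraMap_eq_smul_one]
    exact h2
  -- antipode of t
  have hSt : Sa (k := k) t = -t + x * y - y * x := by
    have := HopfAlgebra.mul_antipode_rTensor_comul_apply (R := k) (A := H) t
    rw [ht, hεt] at this
    simp only [map_add, map_sub, LinearMap.rTensor_tmul, LinearMap.mul'_apply, mul_one,
      one_mul] at this
    rw [show (HopfAlgebra.antipode (R := k) (1 : H)) = 1 from hS1,
      show (HopfAlgebra.antipode (R := k) x) = -x from hSprim x hx,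
      show (HopfAlgebra.antipode (R := k) y) = -y from hSprim y hy] at this
    have h : Sa (k := k) t + t + (-x) * y - (-y) * x = 0 := by simpa [Sa] using this
    linear_combination (norm := noncomm_ring) h
  constructor
  · show sandwich (k := k) g _ = _
    rw [ht]
    simp only [map_add, map_sub, TensorProduct.map_tmul, LinearMap.id_apply,
      hSprim x hx, hSprim y hy, hSt, hS1, sandwich, LinearMap.comp_apply,
      LinearMap.mul'_apply, LinearMap.mulRight_apply]
    noncomm_ring
  · show sandwich (k := k) g _ = _
    rw [ht]
    simp only [map_add, map_sub, TensorProduct.map_tmul, LinearMap.id_apply,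
      hSprim x hx, hSprim y hy, hSt, hS1, sandwich, LinearMap.comp_apply,
      LinearMap.mul'_apply, LinearMap.mulRight_apply]
    noncomm_ring
end
end

section
/- Let H be a Hopf algebra over a field of characteristic zero, δ(h) = Δ(h) − (h ⊗ 1 + 1 ⊗ h), δ_ac = (1/2)(δ − τ∘δ). Suppose t₁, t₂ ∈ H satisfy δ(t₁) = x₁ ⊗ x₂ − x₂ ⊗ x₁ and δ(t₂) = y₁ ⊗ y₂ − y₂ ⊗ y₁ with x₁, x₂, y₁, y₂ primitive. Then δ_ac([t₁,t₂]) = ([t₁,y₁] ⊗ y₂ − y₂ ⊗ [t₁,y₁]) + (y₁ ⊗ [t₁,y₂] − [t₁,y₂] ⊗ y₁) + ([x₁,t₂] ⊗ x₂ − x₂ ⊗ [x₁,t₂]) + (x₁ ⊗ [x₂,t₂] − [x₂,t₂] ⊗ x₁). -/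
open TensorProduct

noncomputable section

variable {k H : Type*}

theorem stmt17 [Field k] [CharZero k] [Ring H] [HopfAlgebra k H]
    (t₁ t₂ x₁ x₂ y₁ y₂ : H)
    (hx₁ : IsPrimitive (k := k) x₁) (hx₂ : IsPrimitive (k := k) x₂)
    (hy₁ : IsPrimitive (k := k) y₁) (hy₂ : IsPrimitive (k := k) y₂)
    (ht₁ : delta (k := k) t₁ = x₁ ⊗ₜ[k] x₂ - x₂ ⊗ₜ[k] x₁)
    (ht₂ : delta (k := k) t₂ = y₁ ⊗ₜ[k] y₂ - y₂ ⊗ₜ[k] y₁) :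
    deltaAC (k := k) (t₁ * t₂ - t₂ * t₁) =
      ((t₁ * y₁ - y₁ * t₁) ⊗ₜ[k] y₂ - y₂ ⊗ₜ[k] (t₁ * y₁ - y₁ * t₁)) +
        (y₁ ⊗ₜ[k] (t₁ * y₂ - y₂ * t₁) - (t₁ * y₂ - y₂ * t₁) ⊗ₜ[k] y₁) +
        ((x₁ * t₂ - t₂ * x₁) ⊗ₜ[k] x₂ - x₂ ⊗ₜ[k] (x₁ * t₂ - t₂ * x₁)) +
        (x₁ ⊗ₜ[k] (x₂ * t₂ - t₂ * x₂) - (x₂ * t₂ - t₂ * x₂) ⊗ₜ[k] x₁) := by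
  have hc1 : Coalgebra.comul (R := k) t₁ =
      x₁ ⊗ₜ[k] x₂ - x₂ ⊗ₜ[k] x₁ + (t₁ ⊗ₜ[k] 1 + 1 ⊗ₜ[k] t₁) := by
    have := ht₁
    simp only [delta, LinearMap.sub_apply, LinearMap.add_apply, LinearMap.flip_apply,
      TensorProduct.mk_apply, sub_eq_iff_eq_add] at this
    exact this
  have hc2 : Coalgebra.comul (R := k) t₂ =
      y₁ ⊗ₜ[k] y₂ - y₂ ⊗ₜ[k] y₁ + (t₂ ⊗ₜ[k] 1 + 1 ⊗ₜ[k] t₂) := by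
    have := ht₂
    simp only [delta, LinearMap.sub_apply, LinearMap.add_apply, LinearMap.flip_apply,
      TensorProduct.mk_apply, sub_eq_iff_eq_add] at this
    exact this
  have key : delta (k := k) (t₁ * t₂ - t₂ * t₁)
      - tw (delta (k := k) (t₁ * t₂ - t₂ * t₁)) =
      (2 : k) • ((((t₁ * y₁ - y₁ * t₁) ⊗ₜ[k] y₂ - y₂ ⊗ₜ[k] (t₁ * y₁ - y₁ * t₁)) +
        (y₁ ⊗ₜ[k] (t₁ * y₂ - y₂ * t₁) - (t₁ * y₂ - y₂ * t₁) ⊗ₜ[k] y₁) +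
        ((x₁ * t₂ - t₂ * x₁) ⊗ₜ[k] x₂ - x₂ ⊗ₜ[k] (x₁ * t₂ - t₂ * x₁)) +
        (x₁ ⊗ₜ[k] (x₂ * t₂ - t₂ * x₂) - (x₂ * t₂ - t₂ * x₂) ⊗ₜ[k] x₁))) := by
    rw [two_smul]
    simp only [delta, tw, LinearMap.sub_apply, LinearMap.add_apply, LinearMap.flip_apply,
      TensorProduct.mk_apply, map_sub, map_add, Bialgebra.comul_mul, hc1, hc2,
      mul_sub, sub_mul, mul_add, add_mul, Algebra.TensorProduct.tmul_mul_tmul,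
      one_mul, mul_one, LinearEquiv.coe_coe, TensorProduct.comm_tmul, TensorProduct.sub_tmul,
      TensorProduct.tmul_sub, TensorProduct.add_tmul, TensorProduct.tmul_add]
    abel
  rw [deltaAC, key, smul_smul, inv_mul_cancel₀ (two_ne_zero), one_smul]
end
end
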